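/- arXiv:2302.10148 — 4 statements merged into one kernel-verified Lean document; each statement's English description precedes it below -/
import Mathlib

section
/- Let $X$ be a binomial random variable with parameters $n$ and $k/n$, where $0 \le k \le n$ are integers and $n \ge 1$. Then $\mathbb{P}(X = k) \ge 1/(n+1)$. -/
/-!
The weights `C(n,j) p^j (1-p)^(n-j)`, `0 ≤ j ≤ n`, sum to `(p + (1-p))^n = 1`, so the largest of
these `n + 1` weights is at least `1/(n+1)`. Consecutive weights satisfy
`w(j+1) (j+1)(1-p) = w(j) (n-j) p`, so they increase while `j + 1 ≤ (n+1) p` and decrease after;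
the largest one sits at any `k` with `k ≤ (n+1) p ≤ k + 1`, and for `p = k/n` we have
`(n+1) p = k + k/n`.
-/

open Finset

noncomputable def binomialWeight (n : ℕ) (p : ℝ) (j : ℕ) : ℝ :=
  n.choose j * p ^ j * (1 - p) ^ (n - j)

namespace binomialWeight

variable {n k : ℕ} {p : ℝ}

lemma nonneg (hp₀ : 0 ≤ p) (hp₁ : p ≤ 1) (j : ℕ) : 0 ≤ binomialWeight n p j := by
  have : 0 ≤ 1 - p := sub_nonneg.2 hp₁
  unfold binomialWeight
  positivity

lemma sum_range_succ_eq_one (n : ℕ) (p : ℝ) :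
    ∑ j ∈ range (n + 1), binomialWeight n p j = 1 := by
  have h := add_pow p (1 - p) n
  rw [add_sub_cancel, one_pow] at h
  rw [h]
  exact sum_congr rfl fun j _ => by unfold binomialWeight; ring

lemma succ_mul_eq {j : ℕ} (hj : j < n) :
    binomialWeight n p (j + 1) * ((j + 1) * (1 - p)) =
      binomialWeight n p j * ((n - j) * p) := by
  obtain ⟨m, hm⟩ : ∃ m, n - j = m + 1 := ⟨n - (j + 1), by omega⟩
  have hchoose : (n.choose (j + 1) : ℝ) * (j + 1) = n.choose j * (m + 1) := by
    exact_mod_cast hm ▸ Nat.choose_succ_right_eq n j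
  have hnj : (n : ℝ) - j = m + 1 := by
    rw [← Nat.cast_sub hj.le, hm]; push_cast; ring
  have hexp : n - (j + 1) = m := by omega
  unfold binomialWeight
  rw [hm, hexp, hnj, pow_succ, pow_succ]
  linear_combination p ^ j * p * (1 - p) ^ m * (1 - p) * hchoose

lemma le_succ {j : ℕ} (hp₁ : p ≤ 1) (hkn : k ≤ n) (hk : k ≤ (n + 1) * p) (hj : j < k) :
    binomialWeight n p j ≤ binomialWeight n p (j + 1) := by
  have hjk : (j : ℝ) + 1 ≤ k := by exact_mod_cast hj
  have hjn : (j : ℝ) < n := by exact_mod_cast hj.trans_le hkn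
  have hp₀ : 0 < p := by nlinarith
  refine le_of_mul_le_mul_right ?_ (mul_pos (sub_pos.2 hjn) hp₀)
  rw [← succ_mul_eq (hj.trans_le hkn)]
  exact mul_le_mul_of_nonneg_left (by nlinarith) (nonneg hp₀.le hp₁ _)

lemma succ_le {j : ℕ} (hp₀ : 0 ≤ p) (hk : (n + 1) * p ≤ k + 1) (hkj : k ≤ j) (hj : j < n) :
    binomialWeight n p (j + 1) ≤ binomialWeight n p j := by
  have hkj' : (k : ℝ) ≤ j := by exact_mod_cast hkj
  have hjn : (j : ℝ) + 1 ≤ n := by exact_mod_cast hj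
  have hp₁ : p < 1 := by nlinarith
  refine le_of_mul_le_mul_right (a := ((j : ℝ) + 1) * (1 - p)) ?_
    (mul_pos (by positivity) (sub_pos.2 hp₁))
  rw [succ_mul_eq hj]
  exact mul_le_mul_of_nonneg_left (by nlinarith) (nonneg hp₀ hp₁.le _)

-- `k ≤ (n + 1) p ≤ k + 1` says that `k` is a mode of `Bi(n, p)`.
lemma le_at_mode (hp₀ : 0 ≤ p) (hp₁ : p ≤ 1) (hkn : k ≤ n) (hk : k ≤ (n + 1) * p)
    (hk' : (n + 1) * p ≤ k + 1) {j : ℕ} (hj : j ≤ n) :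
    binomialWeight n p j ≤ binomialWeight n p k := by
  rcases le_total j k with hjk | hkj
  · refine monotoneOn_of_le_succ Set.ordConnected_Iic (fun i _ _ hi => ?_) hjk le_rfl hjk
    rw [Order.succ_eq_add_one] at hi ⊢
    exact le_succ hp₁ hkn hk (Set.mem_Iic.1 hi)
  · refine antitoneOn_of_succ_le Set.ordConnected_Icc (fun i _ hi hi' => ?_)
      ⟨le_rfl, hkn⟩ ⟨hkj, hj⟩ hkj
    rw [Order.succ_eq_add_one] at hi' ⊢
    exact succ_le hp₀ hk' hi.1 (Set.mem_Icc.1 hi').2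

lemma inv_succ_le_at_mode (hp₀ : 0 ≤ p) (hp₁ : p ≤ 1) (hkn : k ≤ n) (hk : k ≤ (n + 1) * p)
    (hk' : (n + 1) * p ≤ k + 1) :
    1 / (n + 1 : ℝ) ≤ binomialWeight n p k := by
  have hsum : (1 : ℝ) ≤ (n + 1) * binomialWeight n p k := by
    calc (1 : ℝ) = ∑ j ∈ range (n + 1), binomialWeight n p j := (sum_range_succ_eq_one n p).symm
      _ ≤ (range (n + 1)).card • binomialWeight n p k :=
        sum_le_card_nsmul _ _ _ fun j hj =>
          le_at_mode hp₀ hp₁ hkn hk hk' (Nat.lt_succ_iff.1 (mem_range.1 hj))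
      _ = (n + 1) * binomialWeight n p k := by rw [card_range, nsmul_eq_mul, Nat.cast_succ]
  rw [div_le_iff₀ (by positivity)]
  linarith

end binomialWeight

theorem binomial_prob_at_mean_ge_general (n k : ℕ) (hk : k ≤ n) :
    (1 : ℝ) / (n + 1) ≤
      (n.choose k : ℝ) * ((k : ℝ) / n) ^ k * (1 - (k : ℝ) / n) ^ (n - k) := by
  have hp₀ : 0 ≤ (k : ℝ) / n := by positivity
  have hp₁ : (k : ℝ) / n ≤ 1 := div_le_one_of_le₀ (by exact_mod_cast hk) n.cast_nonneg
  have hmean : (n : ℝ) * (k / n) = k := by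
    rcases eq_or_ne n 0 with rfl | hn
    · simp [Nat.le_zero.1 hk]
    · field_simp
  exact binomialWeight.inv_succ_le_at_mode hp₀ hp₁ hk (by linarith) (by linarith)

/-- Lemma: for `X ~ Bi(n, k/n)` with `0 ≤ k ≤ n`, `n ≥ 1`, we have `ℙ(X = k) ≥ 1/(n+1)`. -/
theorem binomial_prob_at_mean_ge (n k : ℕ) (hn : 1 ≤ n) (hk : k ≤ n) :
    (1 : ℝ) / (n + 1) ≤
      (n.choose k : ℝ) * ((k : ℝ) / n) ^ k * (1 - (k : ℝ) / n) ^ (n - k) :=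
  binomial_prob_at_mean_ge_general n k hk
end

section
/- For every integer $m > 2$, $T^{(3)}(W^{(2)}(m)) < W^{(2)}(m+1)$, where $f^{(k)}$ denotes the $k$-fold composition of $f$. -/
/-- The tower function: `T 0 = 1`, `T (i+1) = 2 ^ T i`. -/
def towerT : ℕ → ℕ
  | 0 => 1
  | i + 1 => 2 ^ towerT i

/-- The wowzer function: `W 0 = 1`, `W (n+1) = T (W n)`. -/
def wowzerW : ℕ → ℕ
  | 0 => 1
  | n + 1 => towerT (wowzerW n)

/-!
Three more tower applications turn `W (W m)` into `W (W m + 3)`, while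
`W (W (m + 1)) = W (T (W m))`; so, `W` being strictly increasing, it suffices that
`n + 3 < T n` for `n = W m ≥ m ≥ 3`.
-/

lemma lt_towerT (n : ℕ) : n < towerT n := by
  induction n with
  | zero => simp [towerT]
  | succ k ih => exact (Nat.succ_le_of_lt ih).trans_lt Nat.lt_two_pow_self

lemma add_three_lt_towerT {n : ℕ} (hn : 3 ≤ n) : n + 3 < towerT n := by
  induction n, hn using Nat.le_induction with
  | base => decide
  | succ k _ ih => exact (Nat.succ_le_of_lt ih).trans_lt Nat.lt_two_pow_self

lemma wowzerW_strictMono : StrictMono wowzerW :=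
  strictMono_nat_of_lt_succ fun n => lt_towerT (wowzerW n)

lemma iterate_towerT_wowzerW (k n : ℕ) : towerT^[k] (wowzerW n) = wowzerW (n + k) := by
  induction k with
  | zero => rfl
  | succ k ih => rw [Function.iterate_succ_apply', ih]; rfl

/-- For `m > 2`, `T^{(3)} (W^{(2)} m) < W^{(2)} (m+1)`. -/
theorem tower_cube_wowzer_sq_lt (m : ℕ) (hm : 2 < m) :
    towerT^[3] (wowzerW^[2] m) < wowzerW^[2] (m + 1) := by
  have hW : 3 ≤ wowzerW m := hm.trans_le wowzerW_strictMono.le_apply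
  calc towerT^[3] (wowzerW^[2] m) = wowzerW (wowzerW m + 3) := iterate_towerT_wowzerW 3 _
    _ < wowzerW (towerT (wowzerW m)) := wowzerW_strictMono (add_three_lt_towerT hW)
    _ = wowzerW^[2] (m + 1) := rfl
end

section
/- Let $\pi \in S_n$ with $n \ge 3$ and $2 \le k \le n-1$. Define $\pi_k = \mathrm{rk}(\pi(1),\dots,\pi(k))$ and $\pi_{k+1} = \mathrm{rk}(\pi(1),\dots,\pi(k+1))$, where $\mathrm{rk}$ replaces each entry by its rank in the sequence. Define, for a permutation $\sigma \in S_m$, $J_1(\sigma) = \min\{ j : \exists i, \{\sigma(i), \sigma(i)+1\} \subseteq \sigma[\{1,\dots,j\}] \}$ (with $\min \emptyset = \infty$). Then $J_1(\pi_k) \le J_1(\pi_{k+1})$. -/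
/-- The (1-based) rank sequence of a finite sequence of distinct numbers:
`rk x i` is the rank of `x i` among the values of `x`. -/
def rkSeq {k : ℕ} (x : Fin k → ℕ) : Fin k → ℕ :=
  fun i => (Finset.univ.filter fun j => x j < x i).card + 1

/-- `J₁(σ) = min { j : ∃ i, {σ(i), σ(i)+1} ⊆ σ[[j]] }`, with `min ∅ = ∞`.
Here `σ[[j]]` is the image of the first `j` positions. -/
noncomputable def J1 {m : ℕ} (σ : Fin m → ℕ) : ℕ∞ :=
  sInf {j : ℕ∞ | ∃ jn : ℕ, (jn : ℕ∞) = j ∧ ∃ i : Fin m,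
    (∃ a : Fin m, (a : ℕ) < jn ∧ σ a = σ i) ∧
    (∃ b : Fin m, (b : ℕ) < jn ∧ σ b = σ i + 1)}

/-!
A pair of positions `a, b < j` with `σ b = σ a + 1` is what `J₁(σ) ≤ j` asks for. For a rank
sequence, `rk x b = rk x a + 1` says that `x b` is the successor of `x a` among the values of `x`:
this survives passing to a subsequence that still contains both positions. So a witness `j ≤ k`
for `π_{k+1}` is a witness for `π_k`, while any `j > k` is beaten by the positions of the ranks
`1` and `2` of `π_k`, which exist because `k ≥ 2`.
-/

open Finset

section J1

variable {m : ℕ} {σ : Fin m → ℕ}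

theorem J1_le_of_succ {j : ℕ} {a b : Fin m} (ha : (a : ℕ) < j) (hb : (b : ℕ) < j)
    (hab : σ b = σ a + 1) : J1 σ ≤ j :=
  sInf_le ⟨j, rfl, a, ⟨a, ha, rfl⟩, ⟨b, hb, hab⟩⟩

theorem le_J1_of_forall_succ {t : ℕ∞}
    (h : ∀ (j : ℕ) (a b : Fin m), (a : ℕ) < j → (b : ℕ) < j → σ b = σ a + 1 → t ≤ j) :
    t ≤ J1 σ := by
  refine le_sInf ?_
  rintro _ ⟨j, rfl, i, ⟨a, ha, hai⟩, ⟨b, hb, hbi⟩⟩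
  exact h j a b ha hb (hai ▸ hbi)

end J1

section rkSeq

variable {m : ℕ} {x : Fin m → ℕ} {a b : Fin m}

theorem rkSeq_le_rkSeq (h : x a ≤ x b) : rkSeq x a ≤ rkSeq x b := by
  unfold rkSeq
  gcongr with j

theorem rkSeq_lt_rkSeq (h : x a < x b) : rkSeq x a < rkSeq x b := by
  unfold rkSeq
  refine Nat.succ_lt_succ (card_lt_card ⟨monotone_filter_right _ fun j _ hj => hj.trans h, ?_⟩)
  intro hsub
  simpa using hsub (mem_filter.2 ⟨mem_univ a, h⟩)

theorem rkSeq_injective (hx : Function.Injective x) : Function.Injective (rkSeq x) := by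
  intro a b hab
  by_contra hne
  rcases (hx.ne hne).lt_or_gt with h | h
  · exact (rkSeq_lt_rkSeq h).ne hab
  · exact (rkSeq_lt_rkSeq h).ne' hab

theorem rkSeq_mem_Icc (x : Fin m → ℕ) (i : Fin m) : rkSeq x i ∈ Icc 1 m := by
  have : #{j | x j < x i} < Fintype.card (Fin m) :=
    card_lt_univ_of_notMem (x := i) (by simp)
  simp only [Fintype.card_fin] at this
  simp only [rkSeq, mem_Icc]
  omega

theorem image_rkSeq_univ (hx : Function.Injective x) : univ.image (rkSeq x) = Icc 1 m :=
  eq_of_subset_of_card_le (image_subset_iff.2 fun i _ => rkSeq_mem_Icc x i)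
    (by simp [card_image_of_injective _ (rkSeq_injective hx)])

theorem rkSeq_eq_add_card (h : x a < x b) :
    rkSeq x b = rkSeq x a + #{j | x a ≤ x j ∧ x j < x b} := by
  unfold rkSeq
  rw [← card_filter_add_card_filter_not (fun j => x j < x a), filter_filter, filter_filter]
  have hlow : ∀ j, x j < x b ∧ x j < x a ↔ x j < x a := fun j =>
    ⟨And.right, fun hj => ⟨hj.trans h, hj⟩⟩
  have hmid : ∀ j, x j < x b ∧ ¬x j < x a ↔ x a ≤ x j ∧ x j < x b := fun j => by omega
  simp only [hlow, hmid]
  omega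

theorem rkSeq_eq_add_one_iff (hx : Function.Injective x) :
    rkSeq x b = rkSeq x a + 1 ↔ x a < x b ∧ ∀ j, ¬(x a < x j ∧ x j < x b) := by
  constructor
  · intro hrk
    have hlt : x a < x b := by
      by_contra hle
      have := rkSeq_le_rkSeq (not_lt.1 hle)
      omega
    refine ⟨hlt, fun c hc => ?_⟩
    have hcard := rkSeq_eq_add_card hlt
    have : 1 < #{j | x a ≤ x j ∧ x j < x b} :=
      one_lt_card.2 ⟨a, by simpa using hlt, c, by simpa using ⟨hc.1.le, hc.2⟩,
        fun hac => by subst hac; exact hc.1.false⟩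
    omega
  · rintro ⟨hlt, hcov⟩
    have : ({j | x a ≤ x j ∧ x j < x b} : Finset (Fin m)) = {a} := by
      ext j
      simp only [mem_filter, mem_univ, true_and, mem_singleton]
      constructor
      · rintro ⟨h1, h2⟩
        by_contra hja
        exact hcov j ⟨lt_of_le_of_ne h1 (hx.ne hja).symm, h2⟩
      · rintro rfl
        exact ⟨le_rfl, hlt⟩
    rw [rkSeq_eq_add_card hlt, this, card_singleton]

theorem rkSeq_comp_eq_add_one {k : ℕ} {g : Fin k → Fin m} (hx : Function.Injective x)
    (hg : Function.Injective g) {a b : Fin k}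
    (h : rkSeq x (g b) = rkSeq x (g a) + 1) : rkSeq (x ∘ g) b = rkSeq (x ∘ g) a + 1 := by
  obtain ⟨hlt, hcov⟩ := (rkSeq_eq_add_one_iff hx).1 h
  exact (rkSeq_eq_add_one_iff (hx.comp hg)).2 ⟨hlt, fun j => hcov (g j)⟩

end rkSeq

theorem J1_rkSeq_le_length {m : ℕ} {x : Fin m → ℕ} (hx : Function.Injective x) (hm : 2 ≤ m) :
    J1 (rkSeq x) ≤ m := by
  have hranks : ∀ r ∈ Icc 1 m, ∃ i, rkSeq x i = r := fun r hr => by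
    rw [← image_rkSeq_univ hx] at hr
    simpa using hr
  obtain ⟨a, ha⟩ := hranks 1 (mem_Icc.2 ⟨le_rfl, by omega⟩)
  obtain ⟨b, hb⟩ := hranks 2 (mem_Icc.2 ⟨by omega, hm⟩)
  exact J1_le_of_succ a.isLt b.isLt (by rw [ha, hb])

theorem J1_rkSeq_prefix_le {k m : ℕ} (hkm : k ≤ m) (hk : 2 ≤ k) {x : Fin m → ℕ}
    (hx : Function.Injective x) : J1 (rkSeq (x ∘ Fin.castLE hkm)) ≤ J1 (rkSeq x) := by
  refine le_J1_of_forall_succ fun j a b ha hb hab => ?_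
  rcases le_or_gt j k with hjk | hjk
  · have hrk := rkSeq_comp_eq_add_one hx (Fin.castLE_injective hkm)
      (a := ⟨a, by omega⟩) (b := ⟨b, by omega⟩) hab
    exact J1_le_of_succ ha hb hrk
  · calc J1 (rkSeq (x ∘ Fin.castLE hkm)) ≤ k :=
          J1_rkSeq_le_length (hx.comp (Fin.castLE_injective hkm)) hk
      _ ≤ j := by exact_mod_cast hjk.le

/-- For `π ∈ Sₙ`, `n ≥ 3`, `2 ≤ k ≤ n-1`: `J₁(π_k) ≤ J₁(π_{k+1})`, where
`π_k = rk(π(1), …, π(k))`. -/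
theorem J1_rank_prefix_mono (n : ℕ) (k : ℕ) (hk2 : 2 ≤ k) (hk : k ≤ n - 1)
    (π : Equiv.Perm (Fin n)) :
    J1 (rkSeq fun i : Fin k => ((π (Fin.castLE (by omega) i) : Fin n) : ℕ)) ≤
      J1 (rkSeq fun i : Fin (k + 1) => ((π (Fin.castLE (by omega) i) : Fin n) : ℕ)) :=
  J1_rkSeq_prefix_le k.le_succ hk2 <|
    Fin.val_injective.comp <| π.injective.comp <| Fin.castLE_injective _
end

section
/- Let $q$ satisfy $0 < |1 - q| \le c n^{-4}$ for a constant $c > 0$, and for $1 \le i \le n$ let $Z_i \sim \mathrm{TGeo}(n-i+1, 1-q)$ and $X_i$ uniform on $\{1,\dots,n-i+1\}$. Then the total variation distance satisfies $d_{TV}(Z_i, X_i) = O(c n^{-3})$ as $n \to \infty$, uniformly in $i$. -/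
/-!
Write `δ = |1 - q|`. Both `q` and `q⁻¹` are at least `1 - δ`, so Bernoulli's inequality gives
`(1 - nδ) q ^ k ≤ q ^ j` for all `j, k ≤ n`: on `{1, …, m}` with `m ≤ n` the truncated geometric
weights `q ^ (k - 1)` agree up to the ratio `(1 - nδ)⁻¹`. Normalised weights whose pairwise
ratios are at most `a⁻¹` are within `a⁻¹ - 1` of the uniform distribution in `ℓ¹`, so the total
variation distance is at most `nδ` once `nδ ≤ 1/2`, and `nδ ≤ c / n ^ 3`.
-/

open Finset

theorem two_sub_le_inv {a : ℝ} (ha : 0 < a) : 2 - a ≤ a⁻¹ := by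
  have := mul_inv_cancel₀ ha.ne'
  nlinarith [sq_nonneg (a - 1), inv_pos.mpr ha]

theorem sum_abs_div_sum_sub_inv_card_le {ι : Type*} {s : Finset ι} (hs : s.Nonempty)
    {w : ι → ℝ} {a : ℝ} (ha : 0 < a) (hw : ∀ i ∈ s, 0 < w i)
    (hratio : ∀ i ∈ s, ∀ j ∈ s, a * w i ≤ w j) :
    ∑ i ∈ s, |w i / ∑ j ∈ s, w j - 1 / #s| ≤ a⁻¹ - 1 := by
  set W := ∑ j ∈ s, w j
  have hm : (0 : ℝ) < #s := by exact_mod_cast hs.card_pos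
  have hW : 0 < W := sum_pos hw hs
  have hterm : ∀ i ∈ s, |w i / W - 1 / #s| ≤ (a⁻¹ - 1) / #s := by
    intro i hi
    have hupper : #s * (a * w i) ≤ W := by
      simpa using card_nsmul_le_sum s w _ (hratio i hi)
    have hlower : a * W ≤ #s * w i := by
      have := sum_le_card_nsmul s (fun j => a * w j) _ (fun j hj => hratio j hj i hi)
      rwa [← mul_sum, nsmul_eq_mul] at this
    have hle : w i / W ≤ a⁻¹ / #s := by
      rw [div_le_div_iff₀ hW hm, inv_mul_eq_div, le_div_iff₀ ha]; linarith
    have hge : a / #s ≤ w i / W := by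
      rw [div_le_div_iff₀ hm hW]; linarith
    have hdiv : (1 - a) / #s ≤ (a⁻¹ - 1) / #s :=
      div_le_div_of_nonneg_right (by linarith [two_sub_le_inv ha]) hm.le
    rw [abs_sub_le_iff]
    constructor
    · rw [sub_div]; linarith
    · exact le_trans (by rw [sub_div]; linarith) hdiv
  calc ∑ i ∈ s, |w i / W - 1 / #s| ≤ ∑ _i ∈ s, (a⁻¹ - 1) / #s := sum_le_sum hterm
    _ = a⁻¹ - 1 := by rw [sum_const, nsmul_eq_mul]; field_simp

theorem one_sub_mul_le_pow {r δ : ℝ} (hr : 0 ≤ r) (h : 1 - δ ≤ r) (d : ℕ) :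
    1 - d * δ ≤ r ^ d := by
  have hbernoulli := one_add_mul_le_pow (a := r - 1) (by linarith) d
  rw [add_sub_cancel] at hbernoulli
  nlinarith [d.cast_nonneg (α := ℝ)]

theorem one_sub_mul_abs_sub_mul_pow_le {q : ℝ} (hq : 0 < q) {n j k : ℕ} (hj : j ≤ n)
    (hk : k ≤ n) : (1 - n * |1 - q|) * q ^ k ≤ q ^ j := by
  have hpow : ∀ r : ℝ, 0 ≤ r → 1 - |1 - q| ≤ r → ∀ d ≤ n, 1 - n * |1 - q| ≤ r ^ d := by
    intro r hr hδr d hd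
    have : (d : ℝ) ≤ n := by exact_mod_cast hd
    nlinarith [one_sub_mul_le_pow hr hδr d, abs_nonneg (1 - q)]
  have hq_ge : 1 - |1 - q| ≤ q := by linarith [le_abs_self (1 - q)]
  have hinv_ge : 1 - |1 - q| ≤ q⁻¹ := by linarith [two_sub_le_inv hq, neg_abs_le (1 - q)]
  rcases le_total k j with hkj | hjk
  · calc (1 - n * |1 - q|) * q ^ k ≤ q ^ (j - k) * q ^ k := by
          gcongr
          exact hpow q hq.le hq_ge _ (by omega)
      _ = q ^ j := pow_sub_mul_pow q hkj
  · calc (1 - n * |1 - q|) * q ^ k = (1 - n * |1 - q|) * q ^ (k - j) * q ^ j := by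
          rw [mul_assoc, pow_sub_mul_pow q hjk]
      _ ≤ q⁻¹ ^ (k - j) * q ^ (k - j) * q ^ j := by
          gcongr
          exact hpow q⁻¹ (by positivity) hinv_ge _ (by omega)
      _ = q ^ j := by rw [← mul_pow, inv_mul_cancel₀ hq.ne', one_pow, one_mul]

theorem sum_Icc_one_pow_sub_one_eq_sum_range (q : ℝ) (m : ℕ) :
    ∑ k ∈ Icc 1 m, q ^ (k - 1) = ∑ k ∈ range m, q ^ k := by
  rw [← Ico_add_one_right_eq_Icc, range_eq_Ico, ← zero_add 1, ← sum_Ico_add' _ 0 m 1]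
  simp

theorem truncGeom_mass_eq {q : ℝ} (hq : q ≠ 1) (m k : ℕ) :
    (1 - q) * q ^ (k - 1) / (1 - q ^ m) = q ^ (k - 1) / ∑ j ∈ Icc 1 m, q ^ (j - 1) := by
  rw [sum_Icc_one_pow_sub_one_eq_sum_range, ← mul_neg_geom_sum,
    mul_div_mul_left _ _ (sub_ne_zero.mpr hq.symm)]

theorem sum_abs_truncGeom_sub_uniform_le {q : ℝ} (hq₀ : 0 < q) (hq₁ : q ≠ 1) {m n : ℕ}
    (hm : 1 ≤ m) (hmn : m ≤ n) (hδ : n * |1 - q| < 1) :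
    ∑ k ∈ Icc 1 m, |(1 - q) * q ^ (k - 1) / (1 - q ^ m) - 1 / (m : ℝ)| ≤
      (1 - n * |1 - q|)⁻¹ - 1 := by
  have hcard : (m : ℝ) = #(Icc 1 m) := by simp
  simp_rw [truncGeom_mass_eq hq₁, hcard]
  refine sum_abs_div_sum_sub_inv_card_le (nonempty_Icc.mpr hm) (sub_pos.mpr hδ)
    (fun _ _ => pow_pos hq₀ _) fun i hi j hj => ?_
  rw [mem_Icc] at hi hj
  exact one_sub_mul_abs_sub_mul_pow_le hq₀ (by omega) (by omega)

theorem inv_one_sub_sub_one_le_two_mul {x : ℝ} (hx₀ : 0 ≤ x) (hx : x ≤ 1 / 2) :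
    (1 - x)⁻¹ - 1 ≤ 2 * x := by
  have : (1 - x)⁻¹ ≤ 1 + 2 * x := by
    rw [inv_le_iff_one_le_mul₀ (by linarith)]
    nlinarith
  linarith

/-- For `0 < |1-q| ≤ c n⁻⁴`, the total variation distance between
`TGeo(n-i+1, 1-q)` and the uniform distribution on `{1,…,n-i+1}` is `O(c n⁻³)`,
uniformly in `1 ≤ i ≤ n`. -/
theorem tv_truncGeom_uniform_bound (c : ℝ) (hc : 0 < c) :
    ∃ C > 0, ∃ n₀ : ℕ, ∀ n : ℕ, n₀ ≤ n → ∀ q : ℝ, 0 < q → q ≠ 1 →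
      |1 - q| ≤ c / (n : ℝ) ^ 4 → ∀ i : ℕ, 1 ≤ i → i ≤ n →
        (1 / 2) * ∑ k ∈ Finset.Icc 1 (n - i + 1),
            |(1 - q) * q ^ (k - 1) / (1 - q ^ (n - i + 1)) - 1 / ((n : ℝ) - i + 1)|
          ≤ C * c / (n : ℝ) ^ 3 := by
  refine ⟨1, one_pos, ⌈2 * c⌉₊, fun n hn q hq₀ hq₁ hqc i hi hin => ?_⟩
  have hn : 2 * c ≤ n := (Nat.le_ceil _).trans (by exact_mod_cast hn)
  have hn₁ : (1 : ℝ) ≤ n := Nat.one_le_cast.mpr ((Nat.cast_pos (α := ℝ)).mp (by linarith))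
  set x := n * |1 - q|
  have hx : x ≤ c / n ^ 3 := by
    calc x ≤ n * (c / n ^ 4) := mul_le_mul_of_nonneg_left hqc (by positivity)
      _ = c / n ^ 3 := by field_simp
  have hx_half : x ≤ 1 / 2 := by
    refine hx.trans ?_
    rw [div_le_div_iff₀ (by positivity) two_pos]
    nlinarith [pow_le_pow_right₀ hn₁ (show 1 ≤ 3 by norm_num)]
  have hm : (n : ℝ) - i + 1 = ((n - i + 1 : ℕ) : ℝ) := by push_cast [Nat.cast_sub hin]; ring
  rw [hm]
  calc 1 / 2 * ∑ k ∈ Icc 1 (n - i + 1),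
        |(1 - q) * q ^ (k - 1) / (1 - q ^ (n - i + 1)) - 1 / ((n - i + 1 : ℕ) : ℝ)|
      ≤ 1 / 2 * ((1 - x)⁻¹ - 1) := by
        gcongr
        exact sum_abs_truncGeom_sub_uniform_le hq₀ hq₁ (by omega) (by omega) (by linarith)
    _ ≤ x := by linarith [inv_one_sub_sub_one_le_two_mul (by positivity) hx_half]
    _ ≤ 1 * c / n ^ 3 := by rwa [one_mul]
end
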